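/- arXiv:1301.3398 — 10 statements merged into one kernel-verified Lean document; each statement's English description precedes it below -/
import Mathlib

section
/- Let N ≥ 1, let r ∈ ℝ^N (Euclidean space with the standard inner product ⟪·,·⟫) with r ≠ 0, and let f : ℝ^N → ℝ be differentiable at r with gradient K := ∇f(r). Assume the Euler identity f(r) = ⟪K, r⟫. Then the gradient at r of the 1-normalized functional S₁(x) = f(x)/‖x‖ vanishes if and only if there exists λ ∈ ℝ with K = λ • r; in this case necessarily λ = f(r)/‖r‖². -/
open scoped RealInnerProductSpace

/-!
By the quotient rule, `∇(f / ‖·‖)(r) = ‖r‖⁻¹ • (K - (f r / ‖r‖²) • r)`, which vanishes exactly when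
`K = (f r / ‖r‖²) • r`. Conversely, pairing `K = λ • r` with `r` and using Euler's identity
`f r = ⟪K, r⟫` forces `λ = f r / ‖r‖²`, so every such `λ` makes the gradient vanish.
-/

open ContinuousLinearMap

variable {F : Type*} [NormedAddCommGroup F] [InnerProductSpace ℝ F]

theorem eq_inner_div_norm_sq_of_eq_smul {K r : F} {l : ℝ} (hr : r ≠ 0) (h : K = l • r) :
    l = ⟪K, r⟫ / ‖r‖ ^ 2 := by
  rw [h, real_inner_smul_left, real_inner_self_eq_norm_sq, mul_div_cancel_right₀ _ (by positivity)]

variable [CompleteSpace F]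

theorem HasGradientAt.div {f g : F → ℝ} {f' g' x : F} (hf : HasGradientAt f f' x)
    (hg : HasGradientAt g g' x) (hx : g x ≠ 0) :
    HasGradientAt (fun y => f y / g y) ((g x ^ 2)⁻¹ • (g x • f' - f x • g')) x := by
  simp_rw [hasGradientAt_iff_hasFDerivAt, div_eq_mul_inv] at *
  refine (hf.fun_mul ((hasDerivAt_inv hx).comp_hasFDerivAt x hg)).congr_fderiv ?_
  ext v
  simp only [neg_smul, smul_neg, Function.comp_apply, add_apply, neg_apply, smul_apply,
    InnerProductSpace.toDual_apply_apply, smul_eq_mul, map_smul, map_sub, sub_apply]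
  field_simp
  ring

theorem hasGradientAt_norm {x : F} (hx : x ≠ 0) : HasGradientAt (‖·‖) (‖x‖⁻¹ • x) x := by
  have hsqrt := (hasStrictFDerivAt_norm_sq x).hasFDerivAt.sqrt (by positivity)
  simp only [Real.sqrt_sq (norm_nonneg _)] at hsqrt
  refine hsqrt.congr_fderiv ?_
  ext v
  simp only [one_div, mul_inv_rev, smul_apply, coe_innerSL_apply, nsmul_eq_mul, Nat.cast_ofNat,
    smul_eq_mul, map_smul, InnerProductSpace.toDual_apply_apply]
  field_simp

theorem HasGradientAt.div_norm {f : F → ℝ} {K r : F} (hf : HasGradientAt f K r) (hr : r ≠ 0) :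
    HasGradientAt (fun x => f x / ‖x‖) (‖r‖⁻¹ • (K - (f r / ‖r‖ ^ 2) • r)) r := by
  have hr' : ‖r‖ ≠ 0 := norm_ne_zero_iff.2 hr
  convert hf.div (hasGradientAt_norm hr) hr' using 1
  match_scalars <;> field_simp

theorem stmt_0_general {N : ℕ} (r : EuclideanSpace ℝ (Fin N)) (hr : r ≠ 0)
    (f : EuclideanSpace ℝ (Fin N) → ℝ) (hf : DifferentiableAt ℝ f r)
    (K : EuclideanSpace ℝ (Fin N)) (hK : K = gradient f r)
    (euler : f r = ⟪K, r⟫) :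
    (gradient (fun x => f x / ‖x‖) r = 0 ↔ ∃ l : ℝ, K = l • r) ∧
      (∀ l : ℝ, K = l • r → l = f r / ‖r‖ ^ 2) := by
  have hcoef : ∀ l : ℝ, K = l • r → l = f r / ‖r‖ ^ 2 := fun l hl =>
    euler ▸ eq_inner_div_norm_sq_of_eq_smul hr hl
  have hgrad := (hK ▸ hf.hasGradientAt).div_norm hr
  refine ⟨?_, hcoef⟩
  rw [hgrad.gradient, smul_eq_zero_iff_right (inv_ne_zero (norm_ne_zero_iff.2 hr)), sub_eq_zero]
  exact ⟨fun h => ⟨_, h⟩, fun ⟨l, hl⟩ => hcoef l hl ▸ hl⟩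

/-- Critical points of the 1-normalized total curvature functional `S₁(x) = f x / ‖x‖`
are exactly the discrete quasi-Einstein metrics `K = λ • r`, and then necessarily
`λ = f r / ‖r‖²`. -/
theorem stmt_0 {N : ℕ} (hN : 1 ≤ N) (r : EuclideanSpace ℝ (Fin N)) (hr : r ≠ 0)
    (f : EuclideanSpace ℝ (Fin N) → ℝ) (hf : DifferentiableAt ℝ f r)
    (K : EuclideanSpace ℝ (Fin N)) (hK : K = gradient f r)
    (euler : f r = ⟪K, r⟫) :
    (gradient (fun x => f x / ‖x‖) r = 0 ↔ ∃ l : ℝ, K = l • r) ∧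
      (∀ l : ℝ, K = l • r → l = f r / ‖r‖ ^ 2) :=
  stmt_0_general r hr f hf K hK euler
end

section
/- Let N ≥ 1, let r ∈ ℝ^N (Euclidean space with the standard inner product ⟪·,·⟫) with r ≠ 0, let τ ∈ ℝ with τ ≠ 1, and let f : ℝ^N → ℝ be differentiable at r with gradient K := ∇f(r). Assume the Euler identity f(r) = ⟪K, r⟫. Then the gradient at r of the τ-normalized functional S_τ(x) = f(x)/‖x‖^τ vanishes if and only if K = 0. -/
open scoped RealInnerProductSpace

/-!
By the quotient rule, `∇(f / ‖·‖^τ)(r) = ‖r‖^(-τ) • (K - (τ f(r) / ‖r‖²) • r)`. If this vanishes,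
pairing with `r` and using the Euler identity `f(r) = ⟪K, r⟫` gives `(1 - τ) ⟪K, r⟫ = 0`, so
`⟪K, r⟫ = 0` for `τ ≠ 1`, and then `K` itself vanishes.
-/

section

variable {E : Type*} [NormedAddCommGroup E] [InnerProductSpace ℝ E]

theorem hasFDerivAt_norm_rpow_of_ne_zero {x : E} (hx : x ≠ 0) (p : ℝ) :
    HasFDerivAt (fun x : E ↦ ‖x‖ ^ p) ((p * ‖x‖ ^ (p - 2)) • innerSL ℝ x) x := by
  convert! ((hasStrictFDerivAt_norm_sq x).rpow_const (p := p / 2) (by simp [hx])).hasFDerivAt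
    using 0
  simp_rw [← Real.rpow_natCast_mul (norm_nonneg _), ← Nat.cast_smul_eq_nsmul ℝ, smul_smul]
  ring_nf

theorem sub_smul_inner_div_norm_sq_eq_zero_iff {r : E} (hr : r ≠ 0) {τ : ℝ} (hτ : τ ≠ 1)
    (K : E) : K - (τ * ⟪K, r⟫ / ‖r‖ ^ 2) • r = 0 ↔ K = 0 := by
  refine ⟨fun h ↦ ?_, fun h ↦ by simp [h]⟩
  have hr2 : ‖r‖ ^ 2 ≠ 0 := by positivity
  have hKr : ⟪K, r⟫ = 0 := by
    have h1 : (1 - τ) * ⟪K, r⟫ = 0 := by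
      have := congrArg (⟪·, r⟫) h
      simp only [inner_sub_left, real_inner_smul_left, real_inner_self_eq_norm_sq,
        inner_zero_left] at this
      field_simp at this
      linear_combination this
    exact (mul_eq_zero.mp h1).resolve_left (sub_ne_zero.mpr hτ.symm)
  simpa [hKr] using h

variable [CompleteSpace E]

theorem HasGradientAt.div_norm_rpow {f : E → ℝ} {K r : E} (hf : HasGradientAt f K r)
    (hr : r ≠ 0) (τ : ℝ) :
    HasGradientAt (fun x ↦ f x / ‖x‖ ^ τ) (‖r‖ ^ (-τ) • (K - (τ * f r / ‖r‖ ^ 2) • r)) r := by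
  have hpow : ‖r‖ ^ (-τ - 2) = ‖r‖ ^ (-τ) / ‖r‖ ^ 2 := by
    rw [Real.rpow_sub (norm_pos_iff.mpr hr), Real.rpow_two]
  have hprod := hf.hasFDerivAt.mul (hasFDerivAt_norm_rpow_of_ne_zero hr (-τ))
  have hfun : (fun x ↦ f x / ‖x‖ ^ τ) = f * fun x ↦ ‖x‖ ^ (-τ) := by
    ext x
    simp [div_eq_mul_inv, Real.rpow_neg (norm_nonneg x)]
  rw [hfun, hasGradientAt_iff_hasFDerivAt]
  refine hprod.congr_fderiv ?_
  ext y
  simp only [hpow, neg_mul, neg_smul, smul_neg, add_apply, neg_apply, smul_apply,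
    coe_innerSL_apply, real_inner_comm y, smul_eq_mul, InnerProductSpace.toDual_apply_apply,
    map_smul, map_sub, sub_apply]
  ring

end

theorem stmt_1_general {N : ℕ} (r : EuclideanSpace ℝ (Fin N)) (hr : r ≠ 0)
    (τ : ℝ) (hτ : τ ≠ 1)
    (f : EuclideanSpace ℝ (Fin N) → ℝ) (hf : DifferentiableAt ℝ f r)
    (K : EuclideanSpace ℝ (Fin N)) (hK : K = gradient f r)
    (euler : f r = ⟪K, r⟫) :
    gradient (fun x => f x / ‖x‖ ^ τ) r = 0 ↔ K = 0 := by
  have hgrad : HasGradientAt f K r := hK ▸ hf.hasGradientAt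
  have hnorm : ‖r‖ ^ (-τ) ≠ 0 := (Real.rpow_pos_of_pos (norm_pos_iff.mpr hr) _).ne'
  rw [(hgrad.div_norm_rpow hr τ).gradient, smul_eq_zero_iff_right hnorm, euler]
  exact sub_smul_inner_div_norm_sq_eq_zero_iff hr hτ K

/-- For `τ ≠ 1`, critical points of the τ-normalized total curvature functional
`S_τ(x) = f x / ‖x‖ ^ τ` are exactly the flat discrete quasi-Einstein metrics `K = 0`. -/
theorem stmt_1 {N : ℕ} (hN : 1 ≤ N) (r : EuclideanSpace ℝ (Fin N)) (hr : r ≠ 0)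
    (τ : ℝ) (hτ : τ ≠ 1)
    (f : EuclideanSpace ℝ (Fin N) → ℝ) (hf : DifferentiableAt ℝ f r)
    (K : EuclideanSpace ℝ (Fin N)) (hK : K = gradient f r)
    (euler : f r = ⟪K, r⟫) :
    gradient (fun x => f x / ‖x‖ ^ τ) r = 0 ↔ K = 0 :=
  stmt_1_general r hr τ hτ f hf K hK euler
end

section
/- Let N ≥ 1, let r ∈ ℝ^N have all coordinates positive, and let 𝒯 be a finite nonempty family of 4-element subsets of Fin N such that (i) every index i ∈ Fin N belongs to some τ ∈ 𝒯, and (ii) for any τ, τ' ∈ 𝒯 there is a finite chain τ = τ₀, τ₁, …, τ_m = τ' in 𝒯 with τ_k ∩ τ_{k+1} ≠ ∅ for each k. Suppose for each τ ∈ 𝒯 we are given a real N×N positive semidefinite matrix Λ_τ with (Λ_τ)_{ij} = 0 whenever i ∉ τ or j ∉ τ, and such that for every x ∈ ℝ^N, Λ_τ.mulVec x = 0 if and only if there exists t ∈ ℝ with xᵢ = t·rᵢ for all i ∈ τ. Then Λ := Σ_{τ ∈ 𝒯} Λ_τ is positive semidefinite and, for every x ∈ ℝ^N, Λ.mulVec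 x = 0 if and only if x = t • r for some t ∈ ℝ; in particular Λ has rank N − 1. -/
/-!
Each block is positive semidefinite, so the quadratic form of `Λ = ∑ Λ_τ` is a sum of
nonnegative terms; hence `Λ x = 0` forces `Λ_τ x = 0` for every tetrahedron, i.e. `x` is
proportional to `r` on every `τ`. Two overlapping tetrahedra share a vertex `j` with `r j ≠ 0`,
so their proportionality constants agree; by connectivity there is a single constant, and since
the tetrahedra cover all vertices, `x ∈ ℝ r`. The rank then follows from rank–nullity.
-/

open Matrix

variable {ι κ K : Type*}

def ChainConnected [DecidableEq ι] (𝒯 : Finset (Finset ι)) : Prop :=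
  ∀ τ ∈ 𝒯, ∀ τ' ∈ 𝒯, ∃ (m : ℕ) (c : ℕ → Finset ι),
    c 0 = τ ∧ c m = τ' ∧ (∀ k ≤ m, c k ∈ 𝒯) ∧ ∀ k < m, (c k ∩ c (k + 1)).Nonempty

section Proportional

variable [MonoidWithZero K] [IsRightCancelMulZero K] {x r : ι → K}

theorem eq_mul_of_mem_chain [DecidableEq ι] (hr : ∀ i, r i ≠ 0) {m : ℕ} {c : ℕ → Finset ι}
    (hblock : ∀ k ≤ m, ∃ t, ∀ i ∈ c k, x i = t * r i)
    (hlink : ∀ k < m, (c k ∩ c (k + 1)).Nonempty)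
    {t : K} (h₀ : ∀ i ∈ c 0, x i = t * r i) : ∀ i ∈ c m, x i = t * r i := by
  suffices ∀ k ≤ m, ∀ i ∈ c k, x i = t * r i from this m le_rfl
  intro k
  induction k with
  | zero => exact fun _ ↦ h₀
  | succ k ih =>
    intro hk
    obtain ⟨j, hj⟩ := hlink k hk
    obtain ⟨hjk, hjk'⟩ := Finset.mem_inter.1 hj
    obtain ⟨s, hs⟩ := hblock (k + 1) hk
    have hxj : x j = t * r j := ih (by omega) j hjk
    have hst : s = t := mul_right_cancel₀ (hr j) ((hs j hjk').symm.trans hxj)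
    rwa [hst] at hs

theorem exists_eq_smul_of_chainConnected [DecidableEq ι] (hr : ∀ i, r i ≠ 0)
    {𝒯 : Finset (Finset ι)} (hcover : ∀ i, ∃ τ ∈ 𝒯, i ∈ τ) (hconn : ChainConnected 𝒯)
    (hblock : ∀ τ ∈ 𝒯, ∃ t, ∀ i ∈ τ, x i = t * r i) : ∃ t : K, x = t • r := by
  rcases isEmpty_or_nonempty ι with _ | ⟨⟨i₀⟩⟩
  · exact ⟨0, Subsingleton.elim _ _⟩
  obtain ⟨τ₀, hτ₀, -⟩ := hcover i₀
  obtain ⟨t, ht⟩ := hblock τ₀ hτ₀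
  refine ⟨t, funext fun i ↦ ?_⟩
  obtain ⟨τ, hτ, hi⟩ := hcover i
  obtain ⟨m, c, rfl, rfl, hc, hlink⟩ := hconn τ₀ hτ₀ τ hτ
  exact eq_mul_of_mem_chain hr (fun k hk ↦ hblock _ (hc k hk)) hlink ht i hi

end Proportional

namespace Matrix

open scoped ComplexOrder

variable [Fintype ι]

theorem PosSemidef.sum_mulVec_eq_zero_iff {𝕜 : Type*} [RCLike 𝕜] {s : Finset κ}
    {A : κ → Matrix ι ι 𝕜} (hA : ∀ τ ∈ s, (A τ).PosSemidef) (x : ι → 𝕜) :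
    (∑ τ ∈ s, A τ) *ᵥ x = 0 ↔ ∀ τ ∈ s, A τ *ᵥ x = 0 := by
  rw [sum_mulVec]
  refine ⟨fun h τ hτ ↦ ?_, Finset.sum_eq_zero⟩
  have hquad : ∑ σ ∈ s, star x ⬝ᵥ A σ *ᵥ x = 0 := by rw [← dotProduct_sum, h, dotProduct_zero]
  rw [Finset.sum_eq_zero_iff_of_nonneg fun σ hσ ↦ (hA σ hσ).dotProduct_mulVec_nonneg x] at hquad
  exact ((hA τ hτ).dotProduct_mulVec_zero_iff x).1 (hquad τ hτ)

theorem rank_eq_card_sub_one_of_mulVec_eq_zero_iff [Field K] {A : Matrix ι ι K} {r : ι → K}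
    (hr : r ≠ 0) (hker : ∀ x, A *ᵥ x = 0 ↔ ∃ t : K, x = t • r) :
    A.rank = Fintype.card ι - 1 := by
  have hspan : LinearMap.ker A.mulVecLin = K ∙ r := by
    ext x
    simp only [LinearMap.mem_ker, mulVecLin_apply, hker, Submodule.mem_span_singleton, eq_comm]
  have := LinearMap.finrank_range_add_finrank_ker A.mulVecLin
  rw [hspan, finrank_span_singleton hr, Module.finrank_fintype_fun_eq_card] at this
  rw [rank]
  omega

end Matrix

theorem stmt_2_general {N : ℕ} (hN : 1 ≤ N) (r : Fin N → ℝ) (hr : ∀ i, 0 < r i)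
    (𝒯 : Finset (Finset (Fin N)))
    (hcover : ∀ i : Fin N, ∃ τ ∈ 𝒯, i ∈ τ)
    (hconn : ∀ τ ∈ 𝒯, ∀ τ' ∈ 𝒯, ∃ (m : ℕ) (c : ℕ → Finset (Fin N)),
      c 0 = τ ∧ c m = τ' ∧ (∀ k ≤ m, c k ∈ 𝒯) ∧
      ∀ k < m, (c k ∩ c (k + 1)).Nonempty)
    (Λ : Finset (Fin N) → Matrix (Fin N) (Fin N) ℝ)
    (hpsd : ∀ τ ∈ 𝒯, (Λ τ).PosSemidef)
    (hker : ∀ τ ∈ 𝒯, ∀ x : Fin N → ℝ,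
      (Λ τ).mulVec x = 0 ↔ ∃ t : ℝ, ∀ i ∈ τ, x i = t * r i) :
    (∑ τ ∈ 𝒯, Λ τ).PosSemidef ∧
      (∀ x : Fin N → ℝ, (∑ τ ∈ 𝒯, Λ τ).mulVec x = 0 ↔ ∃ t : ℝ, x = t • r) ∧
      (∑ τ ∈ 𝒯, Λ τ).rank = N - 1 := by
  have hkerSum : ∀ x, (∑ τ ∈ 𝒯, Λ τ) *ᵥ x = 0 ↔ ∃ t : ℝ, x = t • r := fun x ↦ by
    rw [PosSemidef.sum_mulVec_eq_zero_iff hpsd]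
    constructor
    · exact fun hx ↦ exists_eq_smul_of_chainConnected (fun i ↦ (hr i).ne') hcover hconn
        fun τ hτ ↦ (hker τ hτ x).1 (hx τ hτ)
    · rintro ⟨t, rfl⟩ τ hτ
      exact (hker τ hτ _).2 ⟨t, fun i _ ↦ rfl⟩
  have hr0 : r ≠ 0 := fun h ↦ (hr ⟨0, hN⟩).ne' (congrFun h _)
  refine ⟨posSemidef_sum 𝒯 hpsd, hkerSum, ?_⟩
  simpa using rank_eq_card_sub_one_of_mulVec_eq_zero_iff hr0 hkerSum

/-- The Jacobian `Λ` of the Cooper–Rivin curvature map, being the sum over the tetrahedra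
of positive semidefinite blocks supported on the tetrahedra (each with kernel given by the
restriction of `r`), is positive semidefinite with kernel exactly the span of `r`,
hence of rank `N - 1`. -/
theorem stmt_2 {N : ℕ} (hN : 1 ≤ N) (r : Fin N → ℝ) (hr : ∀ i, 0 < r i)
    (𝒯 : Finset (Finset (Fin N))) (hne : 𝒯.Nonempty)
    (hcard : ∀ τ ∈ 𝒯, τ.card = 4)
    (hcover : ∀ i : Fin N, ∃ τ ∈ 𝒯, i ∈ τ)
    (hconn : ∀ τ ∈ 𝒯, ∀ τ' ∈ 𝒯, ∃ (m : ℕ) (c : ℕ → Finset (Fin N)),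
      c 0 = τ ∧ c m = τ' ∧ (∀ k ≤ m, c k ∈ 𝒯) ∧
      ∀ k < m, (c k ∩ c (k + 1)).Nonempty)
    (Λ : Finset (Fin N) → Matrix (Fin N) (Fin N) ℝ)
    (hpsd : ∀ τ ∈ 𝒯, (Λ τ).PosSemidef)
    (hsupp : ∀ τ ∈ 𝒯, ∀ i j : Fin N, i ∉ τ ∨ j ∉ τ → Λ τ i j = 0)
    (hker : ∀ τ ∈ 𝒯, ∀ x : Fin N → ℝ,
      (Λ τ).mulVec x = 0 ↔ ∃ t : ℝ, ∀ i ∈ τ, x i = t * r i) :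
    (∑ τ ∈ 𝒯, Λ τ).PosSemidef ∧
      (∀ x : Fin N → ℝ, (∑ τ ∈ 𝒯, Λ τ).mulVec x = 0 ↔ ∃ t : ℝ, x = t • r) ∧
      (∑ τ ∈ 𝒯, Λ τ).rank = N - 1 :=
  stmt_2_general hN r hr 𝒯 hcover hconn Λ hpsd hker
end

section
/- Let N ≥ 1, let r ∈ ℝ^N have all coordinates positive, and let Λ be a real N×N positive semidefinite matrix such that for every x ∈ ℝ^N, Λ.mulVec x = 0 if and only if x = t • r for some t ∈ ℝ. Let R be the diagonal matrix with diagonal entries r₁,…,r_N and set L := Λ * R. Then for every x ∈ ℝ^N, Lᵀ.mulVec x = 0 if and only if x = t • r for some t ∈ ℝ; in particular the matrix equation Lᵀx = 0 has, up to scaling, the unique nonzero solution x = r. -/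
open Matrix

theorem diagonal_mulVec_eq_zero_iff {n R : Type*} [Fintype n] [DecidableEq n]
    [NonUnitalNonAssocSemiring R] [NoZeroDivisors R] {d : n → R} (hd : ∀ i, d i ≠ 0)
    {y : n → R} : diagonal d *ᵥ y = 0 ↔ y = 0 := by
  simp only [funext_iff, mulVec_diagonal, Pi.zero_apply, mul_eq_zero, hd, false_or]

theorem transpose_mul_diagonal_of_isSymm {n R : Type*} [Fintype n] [DecidableEq n]
    [CommSemiring R] {A : Matrix n n R} (hA : A.IsSymm) (d : n → R) :
    (A * diagonal d)ᵀ = diagonal d * A := by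
  rw [transpose_mul, diagonal_transpose, hA.eq]

theorem stmt_3_general {N : ℕ} (r : Fin N → ℝ) (hr : ∀ i, 0 < r i)
    (Λ : Matrix (Fin N) (Fin N) ℝ) (hΛ : Λ.PosSemidef)
    (hker : ∀ x : Fin N → ℝ, Λ.mulVec x = 0 ↔ ∃ t : ℝ, x = t • r)
    (L : Matrix (Fin N) (Fin N) ℝ) (hL : L = Λ * Matrix.diagonal r) :
    ∀ x : Fin N → ℝ, Lᵀ.mulVec x = 0 ↔ ∃ t : ℝ, x = t • r := by
  intro x
  have hΛsymm : Λ.IsSymm := hΛ.isHermitian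
  rw [hL, transpose_mul_diagonal_of_isSymm hΛsymm, ← mulVec_mulVec,
    diagonal_mulVec_eq_zero_iff fun i => (hr i).ne', hker]

/-- For the discrete dual-Laplacian `L = Λ R` (with `R = diag(r)`), the kernel of `Lᵀ`
is exactly the span of `r`: the equation `Lᵀ x = 0` has the unique nonzero solution
`x = t • r` up to scaling. -/
theorem stmt_3 {N : ℕ} (hN : 1 ≤ N) (r : Fin N → ℝ) (hr : ∀ i, 0 < r i)
    (Λ : Matrix (Fin N) (Fin N) ℝ) (hΛ : Λ.PosSemidef)
    (hker : ∀ x : Fin N → ℝ, Λ.mulVec x = 0 ↔ ∃ t : ℝ, x = t • r)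
    (L : Matrix (Fin N) (Fin N) ℝ) (hL : L = Λ * Matrix.diagonal r) :
    ∀ x : Fin N → ℝ, Lᵀ.mulVec x = 0 ↔ ∃ t : ℝ, x = t • r :=
  stmt_3_general r hr Λ hΛ hker L hL
end

section
/- Let N ≥ 1 and let K : ℝ^N → ℝ^N be continuously differentiable and invariant under uniform translation: K(u + c • 𝟙) = K(u) for all u ∈ ℝ^N and c ∈ ℝ, where 𝟙 = (1,…,1). Let u : ℝ → ℝ^N satisfy, for all t, u'(t) = −(D K(u(t)))ᵀ (K(u(t))), where D K(x) denotes the (Fréchet) derivative of K at x, viewed as an N×N matrix, and ᵀ is the transpose. Then (a) Σᵢ uᵢ(t) is constant in t, and (b) t ↦ ‖K(u(t))‖² is nonincreasing. -/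
/-!
The Jacobian of a translation-invariant `K` kills the all-ones vector `𝟙`, so
`⟪𝟙, u'⟫ = -⟪DK 𝟙, K⟫ = 0` and `Σᵢ uᵢ = ⟪𝟙, u⟫` is constant. For the energy,
`(d/dt) ‖K(u)‖² = 2 ⟪K, DK u'⟫ = -2 ‖(DK)ᵀ K‖² ≤ 0`.
-/

open ContinuousLinearMap

theorem fderiv_apply_eq_zero_of_forall_add_smul {E F : Type*} [NormedAddCommGroup E]
    [NormedSpace ℝ E] [NormedAddCommGroup F] [NormedSpace ℝ F] {K : E → F} {x v : E}
    (hK : DifferentiableAt ℝ K x) (hinv : ∀ c : ℝ, K (x + c • v) = K x) :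
    fderiv ℝ K x v = 0 := by
  have hline : HasDerivAt (fun c : ℝ => x + c • v) v 0 := by
    simpa using ((hasDerivAt_id (0 : ℝ)).smul_const v).const_add x
  have hcomp : HasDerivAt (fun c : ℝ => K (x + c • v)) (fderiv ℝ K x v) 0 := by
    simpa [Function.comp_def] using hK.hasFDerivAt.comp_hasDerivAt_of_eq 0 hline (by simp)
  simp only [hinv] at hcomp
  exact hcomp.unique (hasDerivAt_const 0 _)

section GradientFlow

variable {E F : Type*} [NormedAddCommGroup E] [InnerProductSpace ℝ E] [CompleteSpace E]
  [NormedAddCommGroup F] [InnerProductSpace ℝ F] [CompleteSpace F]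
  {K : E → F} {u : ℝ → E}

theorem inner_const_of_hasDerivAt_neg_adjoint_fderiv {v : E}
    (hv : ∀ x, fderiv ℝ K x v = 0)
    (hu : ∀ t, HasDerivAt u (-adjoint (fderiv ℝ K (u t)) (K (u t))) t) (t s : ℝ) :
    inner ℝ v (u t) = inner ℝ v (u s) := by
  have hderiv : ∀ t, HasDerivAt (fun t => inner ℝ v (u t)) 0 t := fun t => by
    have h := (innerSL ℝ v).hasFDerivAt.comp_hasDerivAt t (hu t)
    rwa [Function.comp_def, innerSL_apply_apply, inner_neg_right, real_inner_comm,
      adjoint_inner_left, hv, inner_zero_right, neg_zero] at h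
  exact is_const_of_deriv_eq_zero (fun t => (hderiv t).differentiableAt)
    (fun t => (hderiv t).deriv) t s

theorem hasDerivAt_norm_sq_of_hasDerivAt_neg_adjoint_fderiv (hK : Differentiable ℝ K)
    (hu : ∀ t, HasDerivAt u (-adjoint (fderiv ℝ K (u t)) (K (u t))) t) (t : ℝ) :
    HasDerivAt (fun t => ‖K (u t)‖ ^ 2)
      (-(2 * ‖adjoint (fderiv ℝ K (u t)) (K (u t))‖ ^ 2)) t := by
  set A := fderiv ℝ K (u t)
  have hKu : HasDerivAt (fun t => K (u t)) (A (-adjoint A (K (u t)))) t :=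
    (hK (u t)).hasFDerivAt.comp_hasDerivAt t (hu t)
  have hpair : inner ℝ (A (-adjoint A (K (u t)))) (K (u t)) = -‖adjoint A (K (u t))‖ ^ 2 := by
    rw [← adjoint_inner_right, inner_neg_left, real_inner_self_eq_norm_sq]
  have h := hKu.inner ℝ hKu
  simp only [real_inner_self_eq_norm_sq] at h
  refine h.congr_deriv ?_
  rw [real_inner_comm, hpair]
  ring

theorem antitone_norm_sq_of_hasDerivAt_neg_adjoint_fderiv (hK : Differentiable ℝ K)
    (hu : ∀ t, HasDerivAt u (-adjoint (fderiv ℝ K (u t)) (K (u t))) t) :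
    Antitone fun t => ‖K (u t)‖ ^ 2 := by
  have hderiv := hasDerivAt_norm_sq_of_hasDerivAt_neg_adjoint_fderiv hK hu
  refine antitone_of_deriv_nonpos (fun t => (hderiv t).differentiableAt) fun t => ?_
  rw [(hderiv t).deriv]
  exact neg_nonpos.mpr (by positivity)

end GradientFlow

theorem EuclideanSpace.inner_const_one_left {ι : Type*} [Fintype ι] (x : EuclideanSpace ℝ ι) :
    inner ℝ ((WithLp.equiv 2 (ι → ℝ)).symm fun _ => 1) x = ∑ i, x i := by
  simp [PiLp.inner_apply]

theorem stmt_5_general {N : ℕ}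
    (K : EuclideanSpace ℝ (Fin N) → EuclideanSpace ℝ (Fin N)) (hK : ContDiff ℝ 1 K)
    (hinv : ∀ (u : EuclideanSpace ℝ (Fin N)) (c : ℝ),
      K (u + c • (WithLp.equiv 2 (Fin N → ℝ)).symm (fun _ => 1)) = K u)
    (u : ℝ → EuclideanSpace ℝ (Fin N))
    (hu : ∀ t : ℝ,
      HasDerivAt u (-(ContinuousLinearMap.adjoint (fderiv ℝ K (u t)) (K (u t)))) t) :
    (∀ t : ℝ, ∑ i, u t i = ∑ i, u 0 i) ∧
      (∀ t s : ℝ, t ≤ s → ‖K (u s)‖ ^ 2 ≤ ‖K (u t)‖ ^ 2) := by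
  have hKd : Differentiable ℝ K := hK.differentiable one_ne_zero
  refine ⟨fun t => ?_, fun t s hts =>
    antitone_norm_sq_of_hasDerivAt_neg_adjoint_fderiv hKd hu hts⟩
  simp only [← EuclideanSpace.inner_const_one_left]
  exact inner_const_of_hasDerivAt_neg_adjoint_fderiv
    (fun x => fderiv_apply_eq_zero_of_forall_add_smul (hKd x) (hinv x)) hu t 0

/-- Along the fourth-order combinatorial Cooper–Rivin curvature flow
`u' = -(DK(u))ᵀ K(u)` (with `K` invariant under uniform translation, i.e. homogeneity of
degree zero in the metric), the sum `Σᵢ uᵢ` is constant, and the quadratic energy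
`‖K(u)‖²` is nonincreasing.  Here the transpose of the Jacobian matrix `DK(x)` is the
adjoint of the Fréchet derivative of `K` at `x` with respect to the Euclidean inner
product. -/
theorem stmt_5 {N : ℕ} (hN : 1 ≤ N)
    (K : EuclideanSpace ℝ (Fin N) → EuclideanSpace ℝ (Fin N)) (hK : ContDiff ℝ 1 K)
    (hinv : ∀ (u : EuclideanSpace ℝ (Fin N)) (c : ℝ),
      K (u + c • (WithLp.equiv 2 (Fin N → ℝ)).symm (fun _ => 1)) = K u)
    (u : ℝ → EuclideanSpace ℝ (Fin N))
    (hu : ∀ t : ℝ,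
      HasDerivAt u (-(ContinuousLinearMap.adjoint (fderiv ℝ K (u t)) (K (u t)))) t) :
    (∀ t : ℝ, ∑ i, u t i = ∑ i, u 0 i) ∧
      (∀ t s : ℝ, t ≤ s → ‖K (u s)‖ ^ 2 ≤ ‖K (u t)‖ ^ 2) :=
  stmt_5_general K hK hinv u hu
end

section
/- Let N ≥ 1, let r ∈ ℝ^N with r ≠ 0, let λ ≤ 0 be a real number, and let Λ be a real N×N positive semidefinite matrix such that for every x ∈ ℝ^N, Λ.mulVec x = 0 if and only if x = t • r for some t ∈ ℝ. Set M := λ • (I − (r rᵀ)/‖r‖²) − Λ, where r rᵀ denotes the outer-product matrix (r rᵀ)_{ij} = rᵢ rⱼ and I is the identity. Then −M is positive semidefinite, and M.mulVec x = 0 if and only if x = t • r for some t ∈ ℝ (so M has rank N − 1). -/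
/-!
`-M = (-λ)(I - rrᵀ/‖r‖²) + Λ` is a sum of two positive semidefinite matrices, the first one by
Cauchy–Schwarz. For positive semidefinite `A`, `B` the kernel of `A + B` is `ker A ∩ ker B`
(since `x ⬝ (A + B) x = 0` forces both quadratic forms to vanish); here `ker Λ = span r` and the
projector kills `r`, so `ker M = span r`, and rank–nullity gives the rank.
-/

open Matrix
open scoped ComplexOrder

variable {m n : Type*} [Fintype n]

theorem Matrix.PosSemidef.add_mulVec_eq_zero_iff {𝕜 : Type*} [RCLike 𝕜] {A B : Matrix n n 𝕜}
    (hA : A.PosSemidef) (hB : B.PosSemidef) (x : n → 𝕜) :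
    (A + B) *ᵥ x = 0 ↔ A *ᵥ x = 0 ∧ B *ᵥ x = 0 := by
  refine ⟨fun h => ?_, fun ⟨hAx, hBx⟩ => by rw [add_mulVec, hAx, hBx, add_zero]⟩
  have hsum : star x ⬝ᵥ A *ᵥ x + star x ⬝ᵥ B *ᵥ x = 0 := by
    rw [← dotProduct_add, ← add_mulVec, h, dotProduct_zero]
  rw [← hA.dotProduct_mulVec_zero_iff, ← hB.dotProduct_mulVec_zero_iff]
  exact (add_eq_zero_iff_of_nonneg (hA.dotProduct_mulVec_nonneg x)
    (hB.dotProduct_mulVec_nonneg x)).1 hsum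

theorem Matrix.rank_eq_card_sub_one_of_mulVec_eq_zero_iff_s8 {K : Type*} [Field K]
    {A : Matrix m n K} {r : n → K} (hr : r ≠ 0) (hA : ∀ x, A *ᵥ x = 0 ↔ ∃ t : K, x = t • r) :
    A.rank = Fintype.card n - 1 := by
  have hker : LinearMap.ker A.mulVecLin = Submodule.span K {r} := by
    ext x
    simp only [LinearMap.mem_ker, mulVecLin_apply, hA, Submodule.mem_span_singleton, eq_comm]
  have := A.mulVecLin.finrank_range_add_finrank_ker
  rw [hker, finrank_span_singleton hr, Module.finrank_fintype_fun_eq_card] at this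
  rw [rank]
  omega

theorem dotProduct_sq_le_dotProduct_self_mul (r x : n → ℝ) :
    (r ⬝ᵥ x) ^ 2 ≤ (r ⬝ᵥ r) * (x ⬝ᵥ x) := by
  simpa only [dotProduct, sq] using Finset.sum_mul_sq_le_sq_mul_sq Finset.univ r x

theorem mulVec_vecMulVec_self (r x : n → ℝ) : vecMulVec r r *ᵥ x = (r ⬝ᵥ x) • r := by
  rw [vecMulVec_mulVec, op_smul_eq_smul]

theorem posSemidef_one_sub_inv_dotProduct_smul_vecMulVec [DecidableEq n] (r : n → ℝ) :
    (1 - (r ⬝ᵥ r)⁻¹ • vecMulVec r r).PosSemidef := by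
  refine .of_dotProduct_mulVec_nonneg ?_ fun x => ?_
  · have hrr : (vecMulVec r r).IsHermitian := by
      simpa using (posSemidef_vecMulVec_self_star r).isHermitian
    exact isHermitian_one.sub (hrr.smul (IsSelfAdjoint.all _))
  · have hcs : (r ⬝ᵥ x) ^ 2 / (r ⬝ᵥ r) ≤ x ⬝ᵥ x :=
      div_le_of_le_mul₀ (by simpa using dotProduct_star_self_nonneg r)
        (by simpa using dotProduct_star_self_nonneg x)
        (by rw [mul_comm]; exact dotProduct_sq_le_dotProduct_self_mul r x)
    rw [star_trivial, sub_mulVec, one_mulVec, smul_mulVec, mulVec_vecMulVec_self, smul_smul,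
      dotProduct_sub, dotProduct_smul, smul_eq_mul, dotProduct_comm x r]
    linarith [show (r ⬝ᵥ r)⁻¹ * (r ⬝ᵥ x) * (r ⬝ᵥ x) = (r ⬝ᵥ x) ^ 2 / (r ⬝ᵥ r) by ring]

theorem one_sub_inv_dotProduct_smul_vecMulVec_mulVec_self [DecidableEq n] (r : n → ℝ) :
    (1 - (r ⬝ᵥ r)⁻¹ • vecMulVec r r) *ᵥ r = 0 := by
  rcases eq_or_ne r 0 with rfl | hr
  · exact mulVec_zero _
  rw [sub_mulVec, one_mulVec, smul_mulVec, mulVec_vecMulVec_self, smul_smul,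
    inv_mul_cancel₀ (dotProduct_self_eq_zero.not.2 hr), one_smul, sub_self]

theorem stmt_8_general {N : ℕ} (r : Fin N → ℝ) (hr : r ≠ 0)
    (lam : ℝ) (hlam : lam ≤ 0)
    (Λ : Matrix (Fin N) (Fin N) ℝ) (hΛ : Λ.PosSemidef)
    (hker : ∀ x : Fin N → ℝ, Λ.mulVec x = 0 ↔ ∃ t : ℝ, x = t • r)
    (M : Matrix (Fin N) (Fin N) ℝ)
    (hM : M = lam • ((1 : Matrix (Fin N) (Fin N) ℝ) - (r ⬝ᵥ r)⁻¹ • vecMulVec r r) - Λ) :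
    (-M).PosSemidef ∧ (∀ x : Fin N → ℝ, M.mulVec x = 0 ↔ ∃ t : ℝ, x = t • r) ∧
      M.rank = N - 1 := by
  set P := (1 : Matrix (Fin N) (Fin N) ℝ) - (r ⬝ᵥ r)⁻¹ • vecMulVec r r
  have hP : ((-lam) • P).PosSemidef :=
    (posSemidef_one_sub_inv_dotProduct_smul_vecMulVec r).smul (neg_nonneg.2 hlam)
  have hnegM : -M = (-lam) • P + Λ := by rw [hM, neg_sub, neg_smul, neg_add_eq_sub]
  have hkerM : ∀ x, M *ᵥ x = 0 ↔ ∃ t : ℝ, x = t • r := by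
    intro x
    rw [← neg_eq_zero, ← neg_mulVec, hnegM, hP.add_mulVec_eq_zero_iff hΛ, hker,
      and_iff_right_iff_imp]
    rintro ⟨t, rfl⟩
    rw [mulVec_smul, smul_mulVec, one_sub_inv_dotProduct_smul_vecMulVec_mulVec_self, smul_zero,
      smul_zero]
  refine ⟨hnegM ▸ hP.add hΛ, hkerM, ?_⟩
  simpa using rank_eq_card_sub_one_of_mulVec_eq_zero_iff_s8 hr hkerM

/-- Linearization of the normalized second-order flow at a flat or negative DQE-metric:
if `Λ` is positive semidefinite with kernel exactly the span of `r`, and `λ ≤ 0`, then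
`M = λ(I - rrᵀ/‖r‖²) - Λ` satisfies: `-M` is positive semidefinite, and the kernel of `M`
is exactly the span of `r` (so `M` has rank `N - 1`). -/
theorem stmt_8 {N : ℕ} (hN : 1 ≤ N) (r : Fin N → ℝ) (hr : r ≠ 0)
    (lam : ℝ) (hlam : lam ≤ 0)
    (Λ : Matrix (Fin N) (Fin N) ℝ) (hΛ : Λ.PosSemidef)
    (hker : ∀ x : Fin N → ℝ, Λ.mulVec x = 0 ↔ ∃ t : ℝ, x = t • r)
    (M : Matrix (Fin N) (Fin N) ℝ)
    (hM : M = lam • ((1 : Matrix (Fin N) (Fin N) ℝ) - (r ⬝ᵥ r)⁻¹ • vecMulVec r r) - Λ) :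
    (-M).PosSemidef ∧ (∀ x : Fin N → ℝ, M.mulVec x = 0 ↔ ∃ t : ℝ, x = t • r) ∧
      M.rank = N - 1 :=
  stmt_8_general r hr lam hlam Λ hΛ hker M hM
end

section
/- Let N ≥ 1, let r, C ∈ ℝ^N, and let Λ be a real symmetric N×N matrix with Λ.mulVec r = 0. Let R = diagonal(r), Ω = diagonal(C), and G := Ω + R·Λ·R. If G.mulVec C = λ • 𝟙 for some λ ∈ ℝ, where 𝟙 = (1,…,1), then λ = ‖C‖²/N; in particular λ ≥ 0. -/
open Matrix

/-- Isotropy condition for the combinatorial G-curvature flow: if `G = Ω + RΛR`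
(with `R = diag(r)`, `Ω = diag(C)`, `Λ` symmetric and `Λ r = 0`) satisfies
`G C = λ 𝟙`, then `λ = ‖C‖²/N`; in particular `λ ≥ 0`. -/
theorem stmt_12 {N : ℕ} (hN : 1 ≤ N) (r C : Fin N → ℝ)
    (Λ : Matrix (Fin N) (Fin N) ℝ) (hsym : Λ.IsSymm) (hΛr : Λ.mulVec r = 0)
    (G : Matrix (Fin N) (Fin N) ℝ)
    (hG : G = Matrix.diagonal C + Matrix.diagonal r * Λ * Matrix.diagonal r)
    (lam : ℝ) (hiso : G.mulVec C = fun _ => lam) :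
    lam = (∑ i, C i ^ 2) / N ∧ 0 ≤ lam := by
  have hcol : ∀ j, ∑ i, G i j = C j := by
    intro j
    have hΛj : ∑ i, Λ i j * r i = 0 := by
      have := congrFun hΛr j
      simp only [Matrix.mulVec, dotProduct, Pi.zero_apply] at this
      calc ∑ i, Λ i j * r i = ∑ i, Λ j i * r i :=
            Finset.sum_congr rfl fun i _ => by rw [hsym.apply]
        _ = 0 := this
    have : ∀ i, G i j = (if i = j then C j else 0) + r i * Λ i j * r j := by
      intro i
      simp [hG, Matrix.mul_apply, Matrix.diagonal, Finset.sum_ite_eq,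
        Finset.sum_ite_eq', mul_comm, mul_assoc, mul_left_comm]
      by_cases h : i = j <;> simp [h, Matrix.diagonal_apply, eq_comm]
    rw [Finset.sum_congr rfl fun i _ => this i, Finset.sum_add_distrib]
    have : ∑ i, r i * Λ i j * r j = (∑ i, Λ i j * r i) * r j := by
      rw [Finset.sum_mul]
      exact Finset.sum_congr rfl fun i _ => by ring
    rw [this, hΛj, zero_mul, add_zero, Finset.sum_ite_eq' _ j (fun _ => C j)]
    simp
  have key : (N : ℝ) * lam = ∑ j, C j ^ 2 := by
    have h1 : ∑ i, G.mulVec C i = (N : ℝ) * lam := by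
      rw [hiso]; simp [mul_comm]
    have h2 : ∑ i, G.mulVec C i = ∑ j, C j ^ 2 := by
      simp only [Matrix.mulVec, dotProduct]
      rw [Finset.sum_comm]
      refine Finset.sum_congr rfl fun j _ => ?_
      rw [← Finset.sum_mul, hcol j, sq]
    rw [← h1, h2]
  have hN0 : (0 : ℝ) < N := by exact_mod_cast hN
  constructor
  · field_simp
    linarith [key]
  · have hsq : (0:ℝ) ≤ ∑ j, C j ^ 2 :=
      Finset.sum_nonneg fun j _ => sq_nonneg _
    nlinarith
end

section
/- Let N ≥ 1, let f : ℝ^N → ℝ be differentiable with gradient K(x) := ∇f(x), and let r : ℝ → ℝ^N be differentiable with r(t) ≠ 0 for all t and satisfying the normalized flow equation r'(t) = λ(t) • r(t) − K(r(t)), where λ(t) := ⟪r(t), K(r(t))⟫ / ‖r(t)‖². Then for every t, the composite t ↦ f(r(t)) is differentiable with derivative −‖K(r(t)) − λ(t) • r(t)‖²; in particular f(r(t)) is nonincreasing in t. -/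
open scoped RealInnerProductSpace

/-! The chain rule gives `d/dt f(r) = ⟪K, λ r - K⟫`. Since `λ r` is the orthogonal projection of
`K` onto the line through `r`, the residual `K - λ r` is orthogonal to `λ r`, so
`⟪K, λ r - K⟫ = -‖K - λ r‖² ≤ 0`. -/

section

variable {E : Type*} [NormedAddCommGroup E] [InnerProductSpace ℝ E]

lemma real_inner_div_norm_sq_mul_norm_sq (x y : E) : ⟪x, y⟫ / ‖x‖ ^ 2 * ‖x‖ ^ 2 = ⟪x, y⟫ := by
  rcases eq_or_ne x 0 with rfl | hx
  · simp
  · exact div_mul_cancel₀ _ (by positivity)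

lemma real_inner_smul_sub_eq_neg_norm_sub_smul_sq {x y : E} {c : ℝ}
    (hc : c * ‖x‖ ^ 2 = ⟪x, y⟫) : ⟪y, c • x - y⟫ = -‖y - c • x‖ ^ 2 := by
  rw [← real_inner_self_eq_norm_sq]
  simp only [inner_sub_left, inner_sub_right, real_inner_smul_left, real_inner_smul_right,
    real_inner_self_eq_norm_sq, real_inner_comm x y, norm_smul, mul_pow, Real.norm_eq_abs,
    sq_abs]
  linear_combination c * hc

lemma HasGradientAt.hasDerivAt_comp [CompleteSpace E] {f : E → ℝ} {g v : E} {r : ℝ → E} {t : ℝ}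
    (hf : HasGradientAt f g (r t)) (hr : HasDerivAt r v t) :
    HasDerivAt (fun s => f (r s)) ⟪g, v⟫ t :=
  (hasGradientAt_iff_hasFDerivAt.mp hf).comp_hasDerivAt t hr

end

theorem stmt_14_general {N : ℕ}
    (f : EuclideanSpace ℝ (Fin N) → ℝ) (hf : Differentiable ℝ f)
    (K : EuclideanSpace ℝ (Fin N) → EuclideanSpace ℝ (Fin N))
    (hK : ∀ x, K x = gradient f x)
    (r : ℝ → EuclideanSpace ℝ (Fin N))
    (lam : ℝ → ℝ) (hlam : ∀ t, lam t = ⟪r t, K (r t)⟫ / ‖r t‖ ^ 2)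
    (hflow : ∀ t : ℝ, HasDerivAt r (lam t • r t - K (r t)) t) :
    (∀ t : ℝ, HasDerivAt (fun s => f (r s)) (-‖K (r t) - lam t • r t‖ ^ 2) t) ∧
      (∀ t s : ℝ, t ≤ s → f (r s) ≤ f (r t)) := by
  have hderiv : ∀ t, HasDerivAt (fun s => f (r s)) (-‖K (r t) - lam t • r t‖ ^ 2) t := by
    intro t
    have hgrad : HasGradientAt f (K (r t)) (r t) := hK (r t) ▸ (hf (r t)).hasGradientAt
    have hproj : lam t * ‖r t‖ ^ 2 = ⟪r t, K (r t)⟫ :=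
      hlam t ▸ real_inner_div_norm_sq_mul_norm_sq _ _
    rw [← real_inner_smul_sub_eq_neg_norm_sub_smul_sq hproj]
    exact hgrad.hasDerivAt_comp (hflow t)
  exact ⟨hderiv, fun t s hts =>
    antitone_of_hasDerivAt_nonpos hderiv (fun _ => neg_nonpos.mpr (sq_nonneg _)) hts⟩

/-- Along the normalized second-order combinatorial curvature flow `r' = λ • r - K(r)`
with `K = ∇f` and `λ(t) = ⟪r, K(r)⟫ / ‖r‖²`, the energy `f(r(t))` is differentiable with
derivative `-‖K(r(t)) - λ(t) • r(t)‖²`; in particular `f(r(t))` is nonincreasing. -/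
theorem stmt_14 {N : ℕ} (hN : 1 ≤ N)
    (f : EuclideanSpace ℝ (Fin N) → ℝ) (hf : Differentiable ℝ f)
    (K : EuclideanSpace ℝ (Fin N) → EuclideanSpace ℝ (Fin N))
    (hK : ∀ x, K x = gradient f x)
    (r : ℝ → EuclideanSpace ℝ (Fin N)) (hr0 : ∀ t, r t ≠ 0)
    (lam : ℝ → ℝ) (hlam : ∀ t, lam t = ⟪r t, K (r t)⟫ / ‖r t‖ ^ 2)
    (hflow : ∀ t : ℝ, HasDerivAt r (lam t • r t - K (r t)) t) :
    (∀ t : ℝ, HasDerivAt (fun s => f (r s)) (-‖K (r t) - lam t • r t‖ ^ 2) t) ∧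
      (∀ t s : ℝ, t ≤ s → f (r s) ≤ f (r t)) :=
  stmt_14_general f hf K hK r lam hlam hflow
end

section
/- Let N ≥ 1, let f : ℝ^N → ℝ be continuously differentiable with gradient K(x) := ∇f(x), and let r : ℝ → ℝ^N be differentiable with r(t) ≠ 0 for all t ≥ 0 and satisfying, for all t ≥ 0, r'(t) = λ(t) • r(t) − K(r(t)) with λ(t) := ⟪r(t), K(r(t))⟫ / ‖r(t)‖². Suppose r(t) converges as t → +∞ to a point r∞ with r∞ ≠ 0. Then K(r∞) = λ∞ • r∞, where λ∞ := ⟪r∞, K(r∞)⟫ / ‖r∞‖². -/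
/-!
Along the flow `r' = V(r)`, where `V x = (⟪x, K x⟫ / ‖x‖²) • x - K x` is continuous away from
`0` because `K = ∇f` is. Hence `r'(t) → V(r∞)`; but a curve that converges at infinity cannot
have a derivative converging to a nonzero vector, since `r (t + 1) - r t` would then tend to that
vector instead of to `0`. So `V(r∞) = 0`.
-/

open scoped RealInnerProductSpace Topology
open Filter

section IncrementOfDerivative

variable {E : Type*} [NormedAddCommGroup E] [NormedSpace ℝ E] {r g : ℝ → E} {L : E}

-- Mean value theorem for `s ↦ r s - s • L` on `[t, t + 1]`.
theorem tendsto_sub_add_one_of_tendsto_deriv (hd : ∀ᶠ t in atTop, HasDerivAt r (g t) t)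
    (hg : Tendsto g atTop (𝓝 L)) : Tendsto (fun t => r (t + 1) - r t) atTop (𝓝 L) := by
  rw [Metric.tendsto_nhds] at hg ⊢
  intro ε hε
  obtain ⟨T, hT⟩ := eventually_atTop.1 (hd.and (hg (ε / 2) (half_pos hε)))
  filter_upwards [eventually_ge_atTop T] with t ht
  have hderiv : ∀ s ∈ Set.Icc t (t + 1),
      HasDerivWithinAt (fun s => r s - s • L) (g s - L) (Set.Icc t (t + 1)) s := by
    intro s hs
    have hsL : HasDerivAt (fun s : ℝ => s • L) L s := by
      simpa using (hasDerivAt_id s).smul_const L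
    exact ((hT s (ht.trans hs.1)).1.sub hsL).hasDerivWithinAt
  have hbound : ∀ s ∈ Set.Icc t (t + 1), ‖g s - L‖ ≤ ε / 2 := fun s hs =>
    (dist_eq_norm (g s) L ▸ (hT s (ht.trans hs.1)).2).le
  have hmvt := (convex_Icc t (t + 1)).norm_image_sub_le_of_norm_hasDerivWithin_le hderiv hbound
    (Set.left_mem_Icc.2 (by linarith)) (Set.right_mem_Icc.2 (by linarith))
  calc dist (r (t + 1) - r t) L
      = ‖(r (t + 1) - (t + 1) • L) - (r t - t • L)‖ := by
        rw [dist_eq_norm, add_smul, one_smul]; congr 1; abel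
    _ ≤ ε / 2 * ‖(t + 1) - t‖ := hmvt
    _ < ε := by rw [add_sub_cancel_left, norm_one, mul_one]; linarith

theorem eq_zero_of_tendsto_of_tendsto_deriv {a : E} (hd : ∀ᶠ t in atTop, HasDerivAt r (g t) t)
    (hg : Tendsto g atTop (𝓝 L)) (hr : Tendsto r atTop (𝓝 a)) : L = 0 :=
  tendsto_nhds_unique (tendsto_sub_add_one_of_tendsto_deriv hd hg) <| by
    simpa using (hr.comp (tendsto_atTop_add_const_right atTop 1 tendsto_id)).sub hr

end IncrementOfDerivative

theorem ContDiff.continuous_gradient {𝕜 F : Type*} [RCLike 𝕜] [NormedAddCommGroup F]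
    [InnerProductSpace 𝕜 F] [CompleteSpace F] {f : F → 𝕜} (hf : ContDiff 𝕜 1 f) :
    Continuous (gradient f) :=
  (InnerProductSpace.toDual 𝕜 F).symm.continuous.comp (hf.continuous_fderiv one_ne_zero)

theorem stmt_15_general {N : ℕ}
    (f : EuclideanSpace ℝ (Fin N) → ℝ) (hf : ContDiff ℝ 1 f)
    (K : EuclideanSpace ℝ (Fin N) → EuclideanSpace ℝ (Fin N))
    (hK : ∀ x, K x = gradient f x)
    (r : ℝ → EuclideanSpace ℝ (Fin N))
    (hflow : ∀ t : ℝ, 0 ≤ t →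
      HasDerivAt r ((⟪r t, K (r t)⟫ / ‖r t‖ ^ 2) • r t - K (r t)) t)
    (rinf : EuclideanSpace ℝ (Fin N)) (hrinf : rinf ≠ 0)
    (hconv : Filter.Tendsto r Filter.atTop (nhds rinf)) :
    K rinf = (⟪rinf, K rinf⟫ / ‖rinf‖ ^ 2) • rinf := by
  have hKcont : Continuous K := by
    rw [show K = gradient f from funext hK]
    exact hf.continuous_gradient
  have hfield : ContinuousAt (fun x => (⟪x, K x⟫ / ‖x‖ ^ 2) • x - K x) rinf := by
    have hnorm : ‖rinf‖ ^ 2 ≠ 0 := pow_ne_zero 2 (norm_ne_zero_iff.2 hrinf)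
    fun_prop (disch := exact hnorm)
  have hfield_zero := eq_zero_of_tendsto_of_tendsto_deriv (eventually_atTop.2 ⟨0, hflow⟩)
    (hfield.tendsto.comp hconv) hconv
  exact (sub_eq_zero.1 hfield_zero).symm

/-- If the normalized second-order combinatorial curvature flow `r' = λ • r - K(r)`
(with `K = ∇f` and `λ(t) = ⟪r, K(r)⟫ / ‖r‖²`) exists for all `t ≥ 0` and converges to a
nonzero point `r∞`, then the limit is a discrete quasi-Einstein metric:
`K(r∞) = λ∞ • r∞` with `λ∞ = ⟪r∞, K(r∞)⟫ / ‖r∞‖²`. -/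
theorem stmt_15 {N : ℕ} (hN : 1 ≤ N)
    (f : EuclideanSpace ℝ (Fin N) → ℝ) (hf : ContDiff ℝ 1 f)
    (K : EuclideanSpace ℝ (Fin N) → EuclideanSpace ℝ (Fin N))
    (hK : ∀ x, K x = gradient f x)
    (r : ℝ → EuclideanSpace ℝ (Fin N)) (hr0 : ∀ t : ℝ, 0 ≤ t → r t ≠ 0)
    (hflow : ∀ t : ℝ, 0 ≤ t →
      HasDerivAt r ((⟪r t, K (r t)⟫ / ‖r t‖ ^ 2) • r t - K (r t)) t)
    (rinf : EuclideanSpace ℝ (Fin N)) (hrinf : rinf ≠ 0)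
    (hconv : Filter.Tendsto r Filter.atTop (nhds rinf)) :
    K rinf = (⟪rinf, K rinf⟫ / ‖rinf‖ ^ 2) • rinf :=
  stmt_15_general f hf K hK r hflow rinf hrinf hconv
end

section
/- Let N ≥ 1, let K : ℝ^N → ℝ^N be continuously differentiable, and let u : ℝ → ℝ^N satisfy, for all t ≥ 0, u'(t) = −(D K(u(t)))ᵀ (K(u(t))), where D K(x) is the derivative of K at x viewed as an N×N matrix and ᵀ is the transpose. Suppose u(t) converges as t → +∞ to a point u∞, and suppose there is a vector ρ ∈ ℝ^N with all coordinates positive such that every x ∈ ℝ^N with (D K(u∞))ᵀ.mulVec x = 0 satisfies x = t • ρ for some t ∈ ℝ. Then there exists λ ∈ ℝ with K(u∞) = λ • ρ. -/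
/-!
The flow `u' = -(DK u)ᵀ (K u)` has a right-hand side that is continuous in `u`, so along a
convergent trajectory the velocity converges too, to `-(DK u∞)ᵀ (K u∞)`. By the mean value
inequality, a curve whose velocity tends to `c` has increments `u (t + 1) - u t` tending to `c`,
while convergence of the curve forces those increments to tend to `0`. Hence
`(DK u∞)ᵀ (K u∞) = 0`, and the kernel hypothesis puts `K u∞` on the line through `ρ`.
-/

open Filter Topology Set

section LimitOfDerivative

variable {E : Type*} [NormedAddCommGroup E] [NormedSpace ℝ E] {f f' : ℝ → E} {c : E}

theorem tendsto_add_one_sub_of_tendsto_deriv (hf : ∀ᶠ t in atTop, HasDerivAt f (f' t) t)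
    (hf' : Tendsto f' atTop (𝓝 c)) : Tendsto (fun t => f (t + 1) - f t) atTop (𝓝 c) := by
  rw [Metric.tendsto_atTop]
  intro ε hε
  have hclose : ∀ᶠ t in atTop, ‖f' t - c‖ ≤ ε / 2 :=
    (hf'.eventually (Metric.closedBall_mem_nhds c (half_pos hε))).mono fun _ h => by
      rwa [← dist_eq_norm]
  obtain ⟨T, hT⟩ := eventually_atTop.1 (hf.and hclose)
  refine ⟨T, fun t ht => ?_⟩
  have hg : ∀ s ∈ Icc t (t + 1),
      HasDerivWithinAt (fun s => f s - s • c) (f' s - c) (Icc t (t + 1)) s := fun s hs => by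
    have hsc : HasDerivAt (fun s : ℝ => s • c) c s := by
      simpa using (hasDerivAt_id s).smul_const c
    exact ((hT s (ht.trans hs.1)).1.sub hsc).hasDerivWithinAt
  have hmvt := norm_image_sub_le_of_norm_deriv_le_segment' hg
    (fun s hs => (hT s (ht.trans hs.1)).2) (t + 1) (right_mem_Icc.2 (by linarith))
  rw [dist_eq_norm]
  calc ‖f (t + 1) - f t - c‖ = ‖(f (t + 1) - (t + 1) • c) - (f t - t • c)‖ := by
        congr 1; module
    _ ≤ ε / 2 * (t + 1 - t) := hmvt
    _ < ε := by linarith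

theorem eq_zero_of_tendsto_of_tendsto_deriv_s16 {a : E} (hf : ∀ᶠ t in atTop, HasDerivAt f (f' t) t)
    (hlim : Tendsto f atTop (𝓝 a)) (hf' : Tendsto f' atTop (𝓝 c)) : c = 0 := by
  have hshift : Tendsto (fun t => f (t + 1) - f t) atTop (𝓝 (a - a)) :=
    (hlim.comp (tendsto_atTop_add_const_right _ 1 tendsto_id)).sub hlim
  rw [sub_self] at hshift
  exact tendsto_nhds_unique (tendsto_add_one_sub_of_tendsto_deriv hf hf') hshift

end LimitOfDerivative

theorem ContDiff.continuous_adjoint_fderiv_apply {E F : Type*} [NormedAddCommGroup E]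
    [InnerProductSpace ℝ E] [CompleteSpace E] [NormedAddCommGroup F] [InnerProductSpace ℝ F]
    [CompleteSpace F] {K : E → F} (hK : ContDiff ℝ 1 K) :
    Continuous fun x => ContinuousLinearMap.adjoint (fderiv ℝ K x) (K x) :=
  (ContinuousLinearMap.adjoint.continuous.comp (hK.continuous_fderiv one_ne_zero)).clm_apply
    hK.continuous

theorem stmt_16_general {N : ℕ}
    (K : EuclideanSpace ℝ (Fin N) → EuclideanSpace ℝ (Fin N)) (hK : ContDiff ℝ 1 K)
    (u : ℝ → EuclideanSpace ℝ (Fin N))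
    (hu : ∀ t : ℝ, 0 ≤ t →
      HasDerivAt u (-(ContinuousLinearMap.adjoint (fderiv ℝ K (u t)) (K (u t)))) t)
    (uinf : EuclideanSpace ℝ (Fin N))
    (hconv : Filter.Tendsto u Filter.atTop (nhds uinf))
    (ρ : EuclideanSpace ℝ (Fin N))
    (hker : ∀ x : EuclideanSpace ℝ (Fin N),
      ContinuousLinearMap.adjoint (fderiv ℝ K uinf) x = 0 → ∃ t : ℝ, x = t • ρ) :
    ∃ lam : ℝ, K uinf = lam • ρ := by
  set F := fun x => ContinuousLinearMap.adjoint (fderiv ℝ K x) (K x)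
  have hvel : Tendsto (fun t => -F (u t)) atTop (𝓝 (-F uinf)) :=
    ((hK.continuous_adjoint_fderiv_apply.tendsto uinf).comp hconv).neg
  have hcrit : F uinf = 0 := neg_eq_zero.1 <|
    eq_zero_of_tendsto_of_tendsto_deriv_s16 ((eventually_ge_atTop 0).mono hu) hconv hvel
  exact hker _ hcrit

/-- If the fourth-order combinatorial Cooper–Rivin curvature flow `u' = -(DK(u))ᵀ K(u)`
exists for all `t ≥ 0` and converges to `u∞`, and the kernel of `(DK(u∞))ᵀ` is contained
in the span of a vector `ρ` with positive coordinates (the limiting sphere packing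
metric), then `K(u∞) = λ • ρ` for some `λ`: the limit is a discrete quasi-Einstein
metric.  Here the transpose of the Jacobian matrix `DK(x)` is the adjoint of the Fréchet
derivative of `K` at `x` with respect to the Euclidean inner product. -/
theorem stmt_16 {N : ℕ} (hN : 1 ≤ N)
    (K : EuclideanSpace ℝ (Fin N) → EuclideanSpace ℝ (Fin N)) (hK : ContDiff ℝ 1 K)
    (u : ℝ → EuclideanSpace ℝ (Fin N))
    (hu : ∀ t : ℝ, 0 ≤ t →
      HasDerivAt u (-(ContinuousLinearMap.adjoint (fderiv ℝ K (u t)) (K (u t)))) t)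
    (uinf : EuclideanSpace ℝ (Fin N))
    (hconv : Filter.Tendsto u Filter.atTop (nhds uinf))
    (ρ : EuclideanSpace ℝ (Fin N)) (hρ : ∀ i, 0 < ρ i)
    (hker : ∀ x : EuclideanSpace ℝ (Fin N),
      ContinuousLinearMap.adjoint (fderiv ℝ K uinf) x = 0 → ∃ t : ℝ, x = t • ρ) :
    ∃ lam : ℝ, K uinf = lam • ρ :=
  stmt_16_general K hK u hu uinf hconv ρ hker
end
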